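/- arXiv:2510.23209 — 7 statements merged into one kernel-verified Lean document; each statement's English description precedes it below -/
import Mathlib

section
/- For τ ≥ 1/6 and z < 1/2, the unique minimizer over x ∈ [0,1] of g(x) + (x - z)^2/(2τ) is x = 0. -/
noncomputable def g (x : ℝ) : ℝ := if x ≤ 1/2 then x^3 - 3*x^2 + 3*x else 1 - x^3

theorem stmt_6 (τ z : ℝ) (hτ : 1/6 ≤ τ) (hz : z < 1/2) :
    ∀ x ∈ Set.Icc (0:ℝ) 1, x ≠ 0 →
      g 0 + (0 - z)^2/(2*τ) < g x + (x - z)^2/(2*τ) := by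
  intro x hx hxne
  obtain ⟨hx0, hx1⟩ := hx
  have hxpos : 0 < x := lt_of_le_of_ne hx0 (Ne.symm hxne)
  have h2τ : (0:ℝ) < 2*τ := by linarith
  have hg0 : g 0 = 0 := by simp [g]
  rw [hg0, zero_add]
  have key : (0 - z)^2 - (x - z)^2 < g x * (2*τ) := by
    unfold g
    split_ifs with h
    · have hgx : 0 ≤ x^3 - 3*x^2 + 3*x := by nlinarith
      nlinarith [mul_le_mul_of_nonneg_left hτ hgx, mul_pos hxpos (by linarith : (0:ℝ) < 1 - 2*z)]
    · have hgx : 0 ≤ 1 - x^3 := by nlinarith [pow_le_one₀ hx0 hx1 (n:=3)]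
      nlinarith [mul_le_mul_of_nonneg_left hτ hgx, mul_pos hxpos (by linarith : (0:ℝ) < 1 - 2*z),
        pow_nonneg (by linarith : (0:ℝ) ≤ 1 - x) 3]
  have := (div_lt_iff₀ h2τ).2 key
  rw [sub_div] at this
  linarith
end

section
/- For τ ≥ 1/6 and z > 1/2, the unique minimizer over x ∈ [0,1] of g(x) + (x - z)^2/(2τ) is x = 1. -/
theorem stmt_7 (τ z : ℝ) (hτ : 1/6 ≤ τ) (hz : 1/2 < z) :
    ∀ x ∈ Set.Icc (0:ℝ) 1, x ≠ 1 →
      g 1 + (1 - z)^2/(2*τ) < g x + (x - z)^2/(2*τ) := by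
  intro x hx hne
  obtain ⟨hx0, hx1⟩ := hx
  have hxlt : x < 1 := lt_of_le_of_ne hx1 hne
  have hτ0 : (0:ℝ) < 2*τ := by linarith
  have hg1 : g 1 = 0 := by norm_num [g]
  have key : g 1 * (2*τ) + (1-z)^2 < g x * (2*τ) + (x-z)^2 := by
    rw [hg1]
    by_cases h : x ≤ 1/2
    · have hgx : g x = x^3 - 3*x^2 + 3*x := by simp only [g, if_pos h]
      rw [hgx]
      have hg0 : 0 ≤ x^3 - 3*x^2 + 3*x := by
        nlinarith [pow_nonneg hx0 3, mul_nonneg hx0 (by linarith : (0:ℝ) ≤ 1 - x)]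
      nlinarith [mul_nonneg (by linarith : (0:ℝ) ≤ 2*τ - 1/3) hg0,
        mul_pos (by linarith : (0:ℝ) < 1 - x) (by linarith : (0:ℝ) < 2*z - 1),
        pow_nonneg hx0 3]
    · have hgx : g x = 1 - x^3 := by simp only [g, if_neg h]
      rw [hgx]
      have hg0 : 0 ≤ 1 - x^3 := by nlinarith [pow_nonneg hx0 2]
      nlinarith [mul_nonneg (by linarith : (0:ℝ) ≤ 2*τ - 1/3) hg0,
        mul_pos (by linarith : (0:ℝ) < 1 - x) (by linarith : (0:ℝ) < 2*z - 1),
        pow_nonneg (by linarith : (0:ℝ) ≤ 1 - x) 3]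
  have h1 : g 1 + (1-z)^2/(2*τ) = (g 1 * (2*τ) + (1-z)^2)/(2*τ) := by field_simp
  have h2 : g x + (x-z)^2/(2*τ) = (g x * (2*τ) + (x-z)^2)/(2*τ) := by field_simp
  rw [h1, h2]
  exact div_lt_div_of_pos_right key hτ0
end

section
/- For τ ≥ 1/6 and z = 1/2, the set of minimizers over x ∈ [0,1] of g(x) + (x - z)^2/(2τ) equals {0, 1}. -/
theorem stmt_8 (τ : ℝ) (hτ : 1/6 ≤ τ) :
    {x : ℝ | x ∈ Set.Icc (0:ℝ) 1 ∧
      ∀ y ∈ Set.Icc (0:ℝ) 1,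
        g x + (x - 1/2)^2/(2*τ) ≤ g y + (y - 1/2)^2/(2*τ)} = {0, 1} := by
  have hτ0 : 0 < τ := lt_of_lt_of_le (by norm_num) hτ
  have ht0 : 0 < 1/(2*τ) := by positivity
  have ht3 : 1/(2*τ) ≤ 3 := by rw [div_le_iff₀ (by linarith)]; linarith
  set t := 1/(2*τ) with htdef
  have hdiv : ∀ y : ℝ, (y - 1/2)^2/(2*τ) = t * (y - 1/2)^2 := by
    intro y; rw [htdef]; ring
  have h8 : 1/(8*τ) = t * (1/4) := by rw [htdef]; ring
  have key : ∀ x ∈ Set.Icc (0:ℝ) 1, 1/(8*τ) ≤ g x + (x - 1/2)^2/(2*τ) := by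
    rintro x ⟨h0, h1⟩
    rw [hdiv, h8, g]
    split_ifs with h
    · nlinarith [mul_nonneg (mul_nonneg (sub_nonneg.2 ht3) h0) (by linarith : (0:ℝ) ≤ 1 - x),
        pow_nonneg h0 3]
    · nlinarith [mul_nonneg (mul_nonneg (sub_nonneg.2 ht3) h0) (by linarith : (0:ℝ) ≤ 1 - x),
        pow_nonneg (by linarith : (0:ℝ) ≤ 1 - x) 3]
  have keys : ∀ x ∈ Set.Icc (0:ℝ) 1, x ≠ 0 → x ≠ 1 →
      1/(8*τ) < g x + (x - 1/2)^2/(2*τ) := by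
    rintro x ⟨h0, h1⟩ hx0 hx1
    have h0' : 0 < x := lt_of_le_of_ne h0 (Ne.symm hx0)
    have h1' : x < 1 := lt_of_le_of_ne h1 hx1
    rw [hdiv, h8, g]
    split_ifs with h
    · nlinarith [mul_nonneg (mul_nonneg (sub_nonneg.2 ht3) h0) (by linarith : (0:ℝ) ≤ 1 - x),
        pow_pos h0' 3]
    · nlinarith [mul_nonneg (mul_nonneg (sub_nonneg.2 ht3) h0) (by linarith : (0:ℝ) ≤ 1 - x),
        pow_pos (by linarith : (0:ℝ) < 1 - x) 3]
  have F0 : g 0 + ((0:ℝ) - 1/2)^2/(2*τ) = 1/(8*τ) := by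
    rw [hdiv, h8]; rw [show g 0 = 0 by norm_num [g]]; ring_nf
  have F1 : g 1 + ((1:ℝ) - 1/2)^2/(2*τ) = 1/(8*τ) := by
    rw [hdiv, h8]; rw [show g 1 = 0 by norm_num [g]]; ring_nf
  ext x
  simp only [Set.mem_setOf_eq, Set.mem_insert_iff, Set.mem_singleton_iff]
  constructor
  · rintro ⟨hx, hmin⟩
    by_contra hc
    push_neg at hc
    have h := hmin 0 (by norm_num)
    rw [F0] at h
    exact absurd h (not_le.2 (keys x hx hc.1 hc.2))
  · rintro (rfl | rfl)
    · exact ⟨by norm_num, fun y hy => F0 ▸ key y hy⟩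
    · exact ⟨by norm_num, fun y hy => F1 ▸ key y hy⟩
end

section
/- Let 0 < τ < 1/6 and z ≤ 3τ. Then the unique minimizer over x ∈ [0,1] of g(x) + (x - z)^2/(2τ) is x = 0. -/
theorem stmt_9 (τ z : ℝ) (hτ0 : 0 < τ) (hτ : τ < 1/6) (hz : z ≤ 3*τ) :
    ∀ x ∈ Set.Icc (0:ℝ) 1, x ≠ 0 →
      g 0 + (0 - z)^2/(2*τ) < g x + (x - z)^2/(2*τ) := by
  intro x hx hne
  obtain ⟨hx0, hx1⟩ := hx
  have hx0' : 0 < x := lt_of_le_of_ne hx0 (Ne.symm hne)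
  have h2τ : (0:ℝ) < 2*τ := by linarith
  rw [show g 0 + (0-z)^2/(2*τ) = z^2/(2*τ) by norm_num [g], ← sub_pos]
  have hA : g x + (x - z)^2/(2*τ) - z^2/(2*τ) = g x + (x^2 - 2*x*z)/(2*τ) := by
    field_simp; ring
  rw [hA]
  have hxz : x^2 - 6*τ*x ≤ x^2 - 2*x*z := by nlinarith
  have h3 : (x^2 - 6*τ*x)/(2*τ) ≤ (x^2 - 2*x*z)/(2*τ) := by gcongr
  have h4 : (x^2 - 6*τ*x)/(2*τ) = x^2/(2*τ) - 3*x := by field_simp; ring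
  have h5 : 3*x^2 < x^2/(2*τ) := by
    rw [lt_div_iff₀ h2τ]; nlinarith [mul_pos hx0' hx0']
  by_cases h : x ≤ 1/2
  · rw [g, if_pos h]
    nlinarith [pow_pos hx0' 3, h3, h4, h5]
  · rw [g, if_neg h]
    nlinarith [pow_nonneg (sub_nonneg.2 hx1) 3, h3, h4, h5]
end

section
/- Let 0 < τ < 1/6 and z ≥ 1 - 3τ. Then the unique minimizer over x ∈ [0,1] of g(x) + (x - z)^2/(2τ) is x = 1. -/
theorem stmt_10 (τ z : ℝ) (hτ0 : 0 < τ) (hτ : τ < 1/6) (hz : 1 - 3*τ ≤ z) :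
    ∀ x ∈ Set.Icc (0:ℝ) 1, x ≠ 1 →
      g 1 + (1 - z)^2/(2*τ) < g x + (x - z)^2/(2*τ) := by
  intro x hx hxne
  obtain ⟨hx0, hx1⟩ := hx
  have hx1' : x < 1 := lt_of_le_of_ne hx1 hxne
  have h2τ : (0:ℝ) < 2*τ := by linarith
  have hg1 : g 1 = 0 := by norm_num [g]
  have key : (1-z)^2 - (x-z)^2 < 2*τ*(g x - g 1) := by
    rw [hg1]
    have h1x : 0 < 1 - x := by linarith
    have hzz : 0 ≤ z - (1 - 3*τ) := by linarith
    have step1 : (1-z)^2 - (x-z)^2 ≤ (1-x)*(x-1+6*τ) := by nlinarith [mul_nonneg h1x.le hzz]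
    unfold g
    split_ifs with h
    · have ht : (1-x)^3 + 3*(1-x) - 1 > 0 := by nlinarith [pow_nonneg (show (0:ℝ) ≤ 1-x by linarith) 3]
      nlinarith [mul_pos (show (0:ℝ) < 1/3 - 2*τ by linarith) ht, pow_nonneg hx0 3]
    · nlinarith [mul_pos (mul_pos h1x h1x) (show (0:ℝ) < 1 - 6*τ + 2*τ*(1-x) by nlinarith [mul_pos hτ0 h1x])]
  have hd : (1-z)^2/(2*τ) - (x-z)^2/(2*τ) < g x - g 1 := by
    rw [div_sub_div_same, div_lt_iff₀ h2τ]
    linarith [key]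
  linarith
end

section
/- For λ > 1/6, the function F₂(x) = (1/2)(x - 1/2)² + λ g(x) has no critical points in the open interval (0,1) excluding 1/2, i.e., for all x ∈ (0,1) with x ≠ 1/2, F₂'(x) ≠ 0; moreover, neither one-sided derivative at x = 1/2 vanishes in a way making it a local minimizer, so the only local minimizers of F₂ on [0,1] are x = 0 and x = 1. -/
/-!
On `[0, 1/2]` the function `F₂` is the polynomial `½(x - ½)² + λ(x³ - 3x² + 3x)`, whose derivative
`x - ½ + 3λ(x - 1)²` is at least `x²/2` once `λ ≥ 1/6`; on `[1/2, 1]` it is `½(x - ½)² + λ(1 - x³)`,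
whose derivative `x - ½ - 3λx²` is at most `-(x - 1)²/2`. So `F₂` strictly increases on `[0, 1/2]`
and strictly decreases on `[1/2, 1]`: every point of `(0, 1/2]` has smaller values just to its left,
every point of `(1/2, 1)` has smaller values just to its right.
-/

open Set Filter Topology

theorem StrictMonoOn.not_isLocalMinOn {f : ℝ → ℝ} {s : Set ℝ} {a b x : ℝ}
    (hf : StrictMonoOn f (Icc a b)) (hs : Icc a b ⊆ s) (hx : x ∈ Ioc a b) : ¬ IsLocalMinOn f s x := by
  intro hmin
  have := right_nhdsWithin_Ioo_neBot hx.1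
  have hleft : ∀ᶠ y in 𝓝[Ioo a x] x, f x ≤ f y :=
    hmin.on_subset ((Ioo_subset_Icc_self.trans (Icc_subset_Icc_right hx.2)).trans hs)
  obtain ⟨y, hfy, hy⟩ := (hleft.and self_mem_nhdsWithin).exists
  exact (hf ⟨hy.1.le, hy.2.le.trans hx.2⟩ ⟨hx.1.le, hx.2⟩ hy.2).not_ge hfy

theorem StrictAntiOn.not_isLocalMinOn {f : ℝ → ℝ} {s : Set ℝ} {a b x : ℝ}
    (hf : StrictAntiOn f (Icc a b)) (hs : Icc a b ⊆ s) (hx : x ∈ Ico a b) : ¬ IsLocalMinOn f s x := by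
  intro hmin
  have := left_nhdsWithin_Ioo_neBot hx.2
  have hright : ∀ᶠ y in 𝓝[Ioo x b] x, f x ≤ f y :=
    hmin.on_subset ((Ioo_subset_Icc_self.trans (Icc_subset_Icc_left hx.1)).trans hs)
  obtain ⟨y, hfy, hy⟩ := (hright.and self_mem_nhdsWithin).exists
  exact (hf ⟨hx.1, hx.2.le⟩ ⟨hx.1.trans hy.1.le, hy.2.le⟩ hy.1).not_ge hfy

noncomputable def F₂ (lam y : ℝ) : ℝ := (1/2)*(y - 1/2)^2 + lam * g y

namespace F₂

variable {lam : ℝ}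

theorem leftBranch_deriv_pos (hlam : 1/6 ≤ lam) {x : ℝ} (hx : x ≠ 0) :
    0 < x - 1/2 + lam*(3*x^2 - 6*x + 3) := by
  nlinarith [mul_nonneg (sub_nonneg.2 hlam) (sq_nonneg (x - 1)), pow_pos (abs_pos.2 hx) 2, sq_abs x]

theorem rightBranch_deriv_neg (hlam : 1/6 ≤ lam) {x : ℝ} (hx : x ≠ 1) :
    x - 1/2 - 3*lam*x^2 < 0 := by
  nlinarith [mul_nonneg (sub_nonneg.2 hlam) (sq_nonneg x), pow_pos (abs_pos.2 (sub_ne_zero.2 hx)) 2,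
    sq_abs (x - 1)]

noncomputable def leftBranch (lam y : ℝ) : ℝ := (1/2)*(y - 1/2)^2 + lam * (y^3 - 3*y^2 + 3*y)

noncomputable def rightBranch (lam y : ℝ) : ℝ := (1/2)*(y - 1/2)^2 + lam * (1 - y^3)

theorem hasDerivAt_leftBranch (lam x : ℝ) :
    HasDerivAt (leftBranch lam) (x - 1/2 + lam*(3*x^2 - 6*x + 3)) x := by
  have hquad := (((hasDerivAt_id x).sub_const (1/2 : ℝ)).pow 2).const_mul (1/2 : ℝ)
  have hcubic := (((hasDerivAt_pow 3 x).sub ((hasDerivAt_pow 2 x).const_mul 3)).add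
    ((hasDerivAt_id x).const_mul 3)).const_mul lam
  exact (hquad.add hcubic).congr_deriv (by simp only [id]; push_cast; ring)

theorem hasDerivAt_rightBranch (lam x : ℝ) :
    HasDerivAt (rightBranch lam) (x - 1/2 - 3*lam*x^2) x := by
  have hquad := (((hasDerivAt_id x).sub_const (1/2 : ℝ)).pow 2).const_mul (1/2 : ℝ)
  have hcubic := ((hasDerivAt_const x (1 : ℝ)).sub (hasDerivAt_pow 3 x)).const_mul lam
  exact (hquad.add hcubic).congr_deriv (by simp only [id]; push_cast; ring)

theorem strictMonoOn_leftBranch (hlam : 1/6 ≤ lam) : StrictMonoOn (leftBranch lam) (Icc 0 (1/2)) :=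
  strictMonoOn_of_hasDerivWithinAt_pos (convex_Icc _ _)
    (fun x _ => (hasDerivAt_leftBranch lam x).continuousAt.continuousWithinAt)
    (fun x _ => (hasDerivAt_leftBranch lam x).hasDerivWithinAt)
    (fun x hx => leftBranch_deriv_pos hlam (by rw [interior_Icc] at hx; exact hx.1.ne'))

theorem strictAntiOn_rightBranch (hlam : 1/6 ≤ lam) : StrictAntiOn (rightBranch lam) (Icc (1/2) 1) :=
  strictAntiOn_of_hasDerivWithinAt_neg (convex_Icc _ _)
    (fun x _ => (hasDerivAt_rightBranch lam x).continuousAt.continuousWithinAt)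
    (fun x _ => (hasDerivAt_rightBranch lam x).hasDerivWithinAt)
    (fun x hx => rightBranch_deriv_neg hlam (by rw [interior_Icc] at hx; exact hx.2.ne))

theorem eqOn_leftBranch : EqOn (F₂ lam) (leftBranch lam) (Iic (1/2)) :=
  fun y hy => by simp only [F₂, g, leftBranch, if_pos (mem_Iic.1 hy)]

theorem eqOn_rightBranch : EqOn (F₂ lam) (rightBranch lam) (Ici (1/2)) := by
  intro y hy
  rcases (mem_Ici.1 hy).eq_or_lt with rfl | hlt
  · norm_num [F₂, g, rightBranch]
  · simp only [F₂, g, rightBranch, if_neg (not_le.2 hlt)]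

theorem strictMonoOn (hlam : 1/6 ≤ lam) : StrictMonoOn (F₂ lam) (Icc 0 (1/2)) :=
  (strictMonoOn_leftBranch hlam).congr (eqOn_leftBranch.mono fun _ hy => hy.2).symm

theorem strictAntiOn (hlam : 1/6 ≤ lam) : StrictAntiOn (F₂ lam) (Icc (1/2) 1) :=
  (strictAntiOn_rightBranch hlam).congr (eqOn_rightBranch.mono fun _ hy => hy.1).symm

end F₂

open F₂ in
theorem stmt_13 (lam : ℝ) (hlam : 1/6 < lam) :
    (∀ x ∈ Set.Ioo (0:ℝ) (1/2), x - 1/2 + lam*(3*x^2 - 6*x + 3) ≠ 0) ∧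
    (∀ x ∈ Set.Ioo (1/2:ℝ) 1, x - 1/2 - 3*lam*x^2 ≠ 0) ∧
    (∀ x ∈ Set.Icc (0:ℝ) 1,
      IsLocalMinOn (fun y => (1/2)*(y - 1/2)^2 + lam * g y) (Set.Icc (0:ℝ) 1) x →
      x = 0 ∨ x = 1) := by
  have hlam₀ : 1/6 ≤ lam := hlam.le
  refine ⟨fun x hx => (leftBranch_deriv_pos hlam₀ hx.1.ne').ne',
    fun x hx => (rightBranch_deriv_neg hlam₀ hx.2.ne).ne, fun x hx hmin => ?_⟩
  by_contra! hend
  rcases le_or_gt x (1/2) with hle | hgt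
  · exact (strictMonoOn hlam₀).not_isLocalMinOn (Icc_subset_Icc_right (by norm_num))
      ⟨hx.1.lt_of_ne' hend.1, hle⟩ hmin
  · exact (strictAntiOn hlam₀).not_isLocalMinOn (Icc_subset_Icc_left (by norm_num))
      ⟨hgt.le, hx.2.lt_of_ne hend.2⟩ hmin
end

section
/- Suppose f : ℝ^n → ℝ is ℓ-strongly convex on the box B = [0,1]^n, λ > 0, τ ≥ 1/ℓ, and x̄ ∈ B satisfies for all w ∈ B: ‖x̄ - (x̄ - τ∇f(x̄))‖² + 2τλ p(x̄) ≤ ‖w - (x̄ - τ∇f(x̄))‖² + 2τλ p(w) (i.e., x̄ is a P-stationary point). Then x̄ is a global minimizer of F(x) = f(x) + λp(x) over B. -/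
open RealInnerProductSpace

def Box (n : ℕ) : Set (EuclideanSpace ℝ (Fin n)) := {x | ∀ i, x i ∈ Set.Icc (0:ℝ) 1}

noncomputable def p (n : ℕ) (x : EuclideanSpace ℝ (Fin n)) : ℝ := ∑ i, g (x i)

theorem stmt_15 (n : ℕ) (ℓ lam τ : ℝ) (hℓ : 0 < ℓ) (hlam : 0 < lam) (hτ : 1/ℓ ≤ τ)
    (f : EuclideanSpace ℝ (Fin n) → ℝ)
    (Gf : EuclideanSpace ℝ (Fin n) → EuclideanSpace ℝ (Fin n))
    (hsc : ∀ x ∈ Box n, ∀ w ∈ Box n,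
      f x ≥ f w + ⟪Gf w, x - w⟫ + (ℓ/2)*‖x - w‖^2)
    (xb : EuclideanSpace ℝ (Fin n)) (hxb : xb ∈ Box n)
    (hP : ∀ w ∈ Box n,
      ‖xb - (xb - τ • Gf xb)‖^2 + 2*τ*lam * p n xb ≤
      ‖w - (xb - τ • Gf xb)‖^2 + 2*τ*lam * p n w) :
    ∀ w ∈ Box n, f xb + lam * p n xb ≤ f w + lam * p n w := by
  intro w hw
  have hτ0 : 0 < τ := lt_of_lt_of_le (by positivity) hτ
  have hτℓ : 1 ≤ τ * ℓ := by
    rw [div_le_iff₀ hℓ] at hτ; linarith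
  have hP' := hP w hw
  have e1 : xb - (xb - τ • Gf xb) = τ • Gf xb := by abel
  have e2 : w - (xb - τ • Gf xb) = (w - xb) + τ • Gf xb := by abel
  rw [e1, e2, norm_add_sq_real] at hP'
  have hip : ⟪w - xb, τ • Gf xb⟫ = τ * ⟪Gf xb, w - xb⟫ := by
    rw [real_inner_smul_right, real_inner_comm]
  rw [hip] at hP'
  -- hP' : ‖τ•G‖² + 2τλ p xb ≤ ‖w-xb‖² + 2(τ⟪G,w-xb⟫) + ‖τ•G‖² + 2τλ p w
  have hsc' := hsc w hw xb hxb
  have ha : (0:ℝ) ≤ ‖w - xb‖^2 := sq_nonneg _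
  nlinarith [mul_nonneg (sub_nonneg.mpr hτℓ) ha,
    mul_le_mul_of_nonneg_left (sub_nonneg.mpr hsc') (le_of_lt hτ0)]
end
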